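/- Let n ≥ 2 be an integer, 1 < p < n, μ > 0 and x₀ ∈ ℝⁿ. The function u(x) := ( n^{1/p} ((n−p)/(p−1))^{(p−1)/p} μ^{1/(p−1)} / ( μ^{p/(p−1)} + |x − x₀|^{p/(p−1)} ) )^{(n−p)/p} is positive and smooth on ℝⁿ \ {x₀}, and satisfies −div(|∇u|^{p−2}∇u) = u^{p*−1} pointwise on ℝⁿ \ {x₀}, where p* = np/(n−p). -/

import Mathlib

open Real

/-- Divergence of a vector field on `EuclideanSpace ℝ (Fin n)`. -/
noncomputable def vdiv {n : ℕ} (F : EuclideanSpace ℝ (Fin n) → EuclideanSpace ℝ (Fin n))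
    (x : EuclideanSpace ℝ (Fin n)) : ℝ :=
  ∑ i, fderiv ℝ (fun y => F y i) x (EuclideanSpace.single i 1)

lemma pos_eq_of_log {x y : ℝ} (hx : 0 < x) (hy : 0 < y) (h : Real.log x = Real.log y) : x = y := by
  rw [← Real.exp_log hx, ← Real.exp_log hy, h]

lemma radial_hasFDerivAt {n : ℕ} {x₀ x : EuclideanSpace ℝ (Fin n)} (hx : x ≠ x₀)
    {ρ : ℝ} (hρ : 0 < ρ) (β γ : ℝ) :
    HasFDerivAt (fun y : EuclideanSpace ℝ (Fin n) => (ρ + ((‖y - x₀‖ ^ 2 : ℝ)) ^ β) ^ γ)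
      ((γ * (ρ + ((‖x - x₀‖ ^ 2 : ℝ)) ^ β) ^ (γ - 1) * (β * ((‖x - x₀‖ ^ 2 : ℝ)) ^ (β - 1)) * 2) •
        innerSL ℝ (x - x₀)) x := by
  have hw : (0:ℝ) < ‖x - x₀‖ ^ 2 := pow_pos (norm_pos_iff.mpr (sub_ne_zero.mpr hx)) 2
  have hD : (0:ℝ) < ρ + (‖x - x₀‖ ^ 2 : ℝ) ^ β := by positivity
  have h1 : HasFDerivAt (fun y : EuclideanSpace ℝ (Fin n) => (‖y - x₀‖ ^ 2 : ℝ))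
      ((2:ℕ) • innerSL ℝ (x - x₀)) x := by
    have := ((hasFDerivAt_id x).sub_const x₀).norm_sq
    simpa using this
  have h2 : HasDerivAt (fun t : ℝ => ρ + t ^ β) (β * (‖x - x₀‖ ^ 2 : ℝ) ^ (β - 1)) (‖x - x₀‖ ^ 2) :=
    (Real.hasDerivAt_rpow_const (Or.inl hw.ne')).const_add ρ
  have h3 : HasDerivAt (fun t : ℝ => t ^ γ)
      (γ * (ρ + (‖x - x₀‖ ^ 2 : ℝ) ^ β) ^ (γ - 1)) (ρ + (‖x - x₀‖ ^ 2 : ℝ) ^ β) :=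
    Real.hasDerivAt_rpow_const (Or.inl hD.ne')
  have h4 := (HasDerivAt.comp (‖x - x₀‖ ^ 2) h3 h2).comp_hasFDerivAt x h1
  refine h4.congr_fderiv ?_
  ext v
  simp [smul_smul]
  ring

lemma hasGradientAt_smul_innerSL {n : ℕ} {f : EuclideanSpace ℝ (Fin n) → ℝ} {c : ℝ}
    {v x : EuclideanSpace ℝ (Fin n)} (h : HasFDerivAt f (c • innerSL ℝ v) x) :
    HasGradientAt f (c • v) x := by
  rw [hasGradientAt_iff_hasFDerivAt]
  refine h.congr_fderiv ?_
  ext w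
  simp [InnerProductSpace.toDual_apply_apply, real_inner_smul_left]

/-- key scalar identity for `|∇u|^{p-2} ∇u`. -/
lemma scalar_pow_identity {B D r p q m al : ℝ} (hB : 0 < B) (hD : 0 < D) (hr : 0 < r)
    (hp : 1 < p) (hq : q = p / (p - 1)) (hal : al = (m + 1) * (p - 1)) :
    (B * D ^ (-m - 1) * ((r ^ 2 : ℝ)) ^ (q / 2 - 1) * r) ^ (p - 2) *
      (B * D ^ (-m - 1) * ((r ^ 2 : ℝ)) ^ (q / 2 - 1)) = B ^ (p - 1) * D ^ (-al) := by
  have hp1 : p - 1 ≠ 0 := by intro h; nlinarith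
  have hw2 : (0:ℝ) < r ^ 2 := by positivity
  have hQ : (0:ℝ) < B * D ^ (-m - 1) * ((r ^ 2 : ℝ)) ^ (q / 2 - 1) := by positivity
  have hP : (0:ℝ) < B * D ^ (-m - 1) * ((r ^ 2 : ℝ)) ^ (q / 2 - 1) * r := by positivity
  apply pos_eq_of_log (by positivity) (by positivity)
  rw [Real.log_mul (Real.rpow_pos_of_pos hP _).ne' hQ.ne', Real.log_rpow hP,
    Real.log_mul hQ.ne' hr.ne',
    Real.log_mul (mul_pos hB (Real.rpow_pos_of_pos hD _)).ne' (Real.rpow_pos_of_pos hw2 _).ne',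
    Real.log_mul hB.ne' (Real.rpow_pos_of_pos hD _).ne',
    Real.log_rpow hD, Real.log_rpow hw2, Real.log_pow,
    Real.log_mul (Real.rpow_pos_of_pos hB _).ne' (Real.rpow_pos_of_pos hD _).ne',
    Real.log_rpow hB, Real.log_rpow hD, hq, hal]
  field_simp
  ring

set_option maxHeartbeats 2000000 in
theorem stmt_15 (n : ℕ) (hn : 2 ≤ n) (p : ℝ) (hp : 1 < p) (hpn : p < n)
    (μ : ℝ) (hμ : 0 < μ) (x₀ : EuclideanSpace ℝ (Fin n))
    (u : EuclideanSpace ℝ (Fin n) → ℝ)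
    (hu : ∀ x, u x =
      ((n : ℝ) ^ (1 / p) * (((n : ℝ) - p) / (p - 1)) ^ ((p - 1) / p) * μ ^ (1 / (p - 1)) /
        (μ ^ (p / (p - 1)) + ‖x - x₀‖ ^ (p / (p - 1)))) ^ (((n : ℝ) - p) / p)) :
    (∀ x, 0 < u x) ∧ ContDiffOn ℝ (⊤ : ℕ∞) u {x₀}ᶜ ∧
    ∀ x ∈ ({x₀}ᶜ : Set (EuclideanSpace ℝ (Fin n))),
      -vdiv (fun y => ‖gradient u y‖ ^ (p - 2) • gradient u y) x
        = u x ^ ((n : ℝ) * p / ((n : ℝ) - p) - 1) := by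
  have hp0 : (0:ℝ) < p := lt_trans one_pos hp
  have hp1 : (0:ℝ) < p - 1 := sub_pos.mpr hp
  have hnp : (0:ℝ) < (n:ℝ) - p := sub_pos.mpr hpn
  have hn0 : (0:ℝ) < (n:ℝ) := lt_trans hp0 hpn
  set q := p / (p - 1) with hq
  set m := ((n:ℝ) - p) / p with hm
  set a := ((n:ℝ) - p) / (p - 1) with ha
  set Cc := (n:ℝ) ^ (1 / p) * a ^ ((p - 1) / p) * μ ^ (1 / (p - 1)) with hCc
  have hq0 : (0:ℝ) < q := div_pos hp0 hp1
  have hm0 : (0:ℝ) < m := div_pos hnp hp0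
  have ha0 : (0:ℝ) < a := div_pos hnp hp1
  have hC0 : (0:ℝ) < Cc :=
    mul_pos (mul_pos (rpow_pos_of_pos hn0 _) (rpow_pos_of_pos ha0 _)) (rpow_pos_of_pos hμ _)
  have hμq : (0:ℝ) < μ ^ q := rpow_pos_of_pos hμ q
  have hD0 : ∀ y : EuclideanSpace ℝ (Fin n),
      (0:ℝ) < μ ^ q + ((‖y - x₀‖ ^ 2 : ℝ)) ^ (q / 2) :=
    fun y => add_pos_of_pos_of_nonneg hμq (Real.rpow_nonneg (by positivity) _)
  have hrq : ∀ y : EuclideanSpace ℝ (Fin n),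
      ‖y - x₀‖ ^ q = ((‖y - x₀‖ ^ 2 : ℝ)) ^ (q / 2) := by
    intro y
    rw [← Real.rpow_natCast ‖y - x₀‖ 2, ← Real.rpow_mul (norm_nonneg _)]
    congr 1
    push_cast
    ring
  have hueq : u = fun y => Cc ^ m * (μ ^ q + ((‖y - x₀‖ ^ 2 : ℝ)) ^ (q / 2)) ^ (-m) := by
    funext y
    rw [hu y, hrq y, Real.div_rpow hC0.le (hD0 y).le, Real.rpow_neg (hD0 y).le,
      div_eq_mul_inv]
  subst hueq
  refine ⟨?_, ?_, ?_⟩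
  · intro x
    exact mul_pos (rpow_pos_of_pos hC0 m) (rpow_pos_of_pos (hD0 x) (-m))
  · intro x hx
    have hxne : x ≠ x₀ := hx
    have hw : (0:ℝ) < ‖x - x₀‖ ^ 2 := pow_pos (norm_pos_iff.mpr (sub_ne_zero.mpr hxne)) 2
    have c0 : ContDiffAt ℝ (⊤ : ℕ∞) (fun y : EuclideanSpace ℝ (Fin n) => (‖y - x₀‖ ^ 2 : ℝ)) x :=
      ((contDiff_norm_sq ℝ).comp (contDiff_id.sub contDiff_const)).contDiffAt
    have c1 := c0.rpow_const_of_ne (p := q / 2) hw.ne'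
    have c2 : ContDiffAt ℝ (⊤ : ℕ∞)
        (fun y : EuclideanSpace ℝ (Fin n) => μ ^ q + ((‖y - x₀‖ ^ 2 : ℝ)) ^ (q / 2)) x :=
      contDiffAt_const.add c1
    have c3 := c2.rpow_const_of_ne (p := -m) (hD0 x).ne'
    exact (contDiffAt_const.mul c3).contDiffWithinAt
  · intro x hx
    have hxne : x ≠ x₀ := hx
    have hwx : (0:ℝ) < ‖x - x₀‖ ^ 2 := pow_pos (norm_pos_iff.mpr (sub_ne_zero.mpr hxne)) 2
    have hDx : (0:ℝ) < μ ^ q + ((‖x - x₀‖ ^ 2 : ℝ)) ^ (q / 2) := hD0 x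
    set K := (m * q * Cc ^ m) ^ (p - 1) with hK
    set al := (m + 1) * (p - 1) with hal
    have hB0 : (0:ℝ) < m * q * Cc ^ m :=
      mul_pos (mul_pos hm0 hq0) (rpow_pos_of_pos hC0 m)
    have hK0 : (0:ℝ) < K := rpow_pos_of_pos hB0 _
    -- gradient formula
    have hgrad : ∀ y : EuclideanSpace ℝ (Fin n), y ≠ x₀ →
        HasGradientAt (fun y => Cc ^ m * (μ ^ q + ((‖y - x₀‖ ^ 2 : ℝ)) ^ (q / 2)) ^ (-m))
          ((Cc ^ m * (-m * (μ ^ q + ((‖y - x₀‖ ^ 2 : ℝ)) ^ (q / 2)) ^ (-m - 1) *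
            (q / 2 * ((‖y - x₀‖ ^ 2 : ℝ)) ^ (q / 2 - 1)) * 2)) • (y - x₀)) y := by
      intro y hy
      apply hasGradientAt_smul_innerSL
      have h := (radial_hasFDerivAt hy hμq (q / 2) (-m)).const_mul (Cc ^ m)
      rwa [smul_smul] at h
    -- the vector field
    have hVW : ∀ y : EuclideanSpace ℝ (Fin n), y ≠ x₀ →
        ‖gradient (fun y => Cc ^ m * (μ ^ q + ((‖y - x₀‖ ^ 2 : ℝ)) ^ (q / 2)) ^ (-m)) y‖ ^ (p - 2) •
          gradient (fun y => Cc ^ m * (μ ^ q + ((‖y - x₀‖ ^ 2 : ℝ)) ^ (q / 2)) ^ (-m)) y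
        = ((-K) * (μ ^ q + ((‖y - x₀‖ ^ 2 : ℝ)) ^ (q / 2)) ^ (-al)) • (y - x₀) := by
      intro y hy
      have hDy := hD0 y
      have hwy : (0:ℝ) < ‖y - x₀‖ ^ 2 := pow_pos (norm_pos_iff.mpr (sub_ne_zero.mpr hy)) 2
      have hry : (0:ℝ) < ‖y - x₀‖ := norm_pos_iff.mpr (sub_ne_zero.mpr hy)
      rw [(hgrad y hy).gradient, smul_smul]
      congr 1
      have hQ : (0:ℝ) < m * q * Cc ^ m * (μ ^ q + ((‖y - x₀‖ ^ 2 : ℝ)) ^ (q / 2)) ^ (-m - 1) *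
          ((‖y - x₀‖ ^ 2 : ℝ)) ^ (q / 2 - 1) :=
        mul_pos (mul_pos hB0 (rpow_pos_of_pos hDy _)) (rpow_pos_of_pos hwy _)
      have hc : Cc ^ m * (-m * (μ ^ q + ((‖y - x₀‖ ^ 2 : ℝ)) ^ (q / 2)) ^ (-m - 1) *
            (q / 2 * ((‖y - x₀‖ ^ 2 : ℝ)) ^ (q / 2 - 1)) * 2)
          = -(m * q * Cc ^ m * (μ ^ q + ((‖y - x₀‖ ^ 2 : ℝ)) ^ (q / 2)) ^ (-m - 1) *
            ((‖y - x₀‖ ^ 2 : ℝ)) ^ (q / 2 - 1)) := by ring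
      rw [hc, norm_smul, Real.norm_eq_abs, abs_neg, abs_of_pos hQ, mul_neg, neg_mul, neg_inj, hK]
      exact scalar_pow_identity hB0 hDy hry hp hq hal
    -- derivative of ψ
    have hψ : HasFDerivAt (fun y : EuclideanSpace ℝ (Fin n) =>
        (-K) * (μ ^ q + ((‖y - x₀‖ ^ 2 : ℝ)) ^ (q / 2)) ^ (-al))
        (((-K) * ((-al) * (μ ^ q + ((‖x - x₀‖ ^ 2 : ℝ)) ^ (q / 2)) ^ (-al - 1) *
          (q / 2 * ((‖x - x₀‖ ^ 2 : ℝ)) ^ (q / 2 - 1)) * 2)) • innerSL ℝ (x - x₀)) x := by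
      have h := (radial_hasFDerivAt hxne hμq (q / 2) (-al)).const_mul (-K)
      rwa [smul_smul] at h
    have hfd : ∀ i : Fin n, fderiv ℝ
        (fun y => (‖gradient (fun y => Cc ^ m * (μ ^ q + ((‖y - x₀‖ ^ 2 : ℝ)) ^ (q / 2)) ^ (-m)) y‖ ^ (p - 2) •
          gradient (fun y => Cc ^ m * (μ ^ q + ((‖y - x₀‖ ^ 2 : ℝ)) ^ (q / 2)) ^ (-m)) y) i) x
        = ((-K) * (μ ^ q + ((‖x - x₀‖ ^ 2 : ℝ)) ^ (q / 2)) ^ (-al)) •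
            (EuclideanSpace.proj i : EuclideanSpace ℝ (Fin n) →L[ℝ] ℝ)
          + (x i - x₀ i) • (((-K) * ((-al) * (μ ^ q + ((‖x - x₀‖ ^ 2 : ℝ)) ^ (q / 2)) ^ (-al - 1) *
            (q / 2 * ((‖x - x₀‖ ^ 2 : ℝ)) ^ (q / 2 - 1)) * 2)) • innerSL ℝ (x - x₀)) := by
      intro i
      have hproj0 : HasFDerivAt (fun y : EuclideanSpace ℝ (Fin n) => y i)
          (EuclideanSpace.proj i : EuclideanSpace ℝ (Fin n) →L[ℝ] ℝ) x := by
        have h := (EuclideanSpace.proj i : EuclideanSpace ℝ (Fin n) →L[ℝ] ℝ).hasFDerivAt (x := x)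
        simpa using h
      have hW := hψ.mul (hproj0.sub_const (x₀ i))
      have hEv : (fun y => (‖gradient (fun y => Cc ^ m * (μ ^ q + ((‖y - x₀‖ ^ 2 : ℝ)) ^ (q / 2)) ^ (-m)) y‖ ^ (p - 2) •
            gradient (fun y => Cc ^ m * (μ ^ q + ((‖y - x₀‖ ^ 2 : ℝ)) ^ (q / 2)) ^ (-m)) y) i)
          =ᶠ[nhds x] (fun y => ((-K) * (μ ^ q + ((‖y - x₀‖ ^ 2 : ℝ)) ^ (q / 2)) ^ (-al)) * (y i - x₀ i)) := by
        filter_upwards [isOpen_compl_singleton.mem_nhds hxne] with y hy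
        rw [hVW y hy]
        simp [PiLp.smul_apply, PiLp.sub_apply, smul_eq_mul]
      rw [hEv.fderiv_eq]
      exact hW.fderiv
    have hnormsum : ∑ i, (x i - x₀ i) ^ 2 = (‖x - x₀‖ ^ 2 : ℝ) := by
      rw [EuclideanSpace.norm_eq, Real.sq_sqrt (by positivity)]
      exact Finset.sum_congr rfl fun i _ => by simp [PiLp.sub_apply, Real.norm_eq_abs, sq_abs]
    have h1 : ∀ i : Fin n, fderiv ℝ
        (fun y => (‖gradient (fun y => Cc ^ m * (μ ^ q + ((‖y - x₀‖ ^ 2 : ℝ)) ^ (q / 2)) ^ (-m)) y‖ ^ (p - 2) •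
          gradient (fun y => Cc ^ m * (μ ^ q + ((‖y - x₀‖ ^ 2 : ℝ)) ^ (q / 2)) ^ (-m)) y) i) x
          (EuclideanSpace.single i 1)
        = (-K) * (μ ^ q + ((‖x - x₀‖ ^ 2 : ℝ)) ^ (q / 2)) ^ (-al)
          + ((-K) * ((-al) * (μ ^ q + ((‖x - x₀‖ ^ 2 : ℝ)) ^ (q / 2)) ^ (-al - 1) *
            (q / 2 * ((‖x - x₀‖ ^ 2 : ℝ)) ^ (q / 2 - 1)) * 2)) * (x i - x₀ i) ^ 2 := by
      intro i
      rw [hfd i]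
      simp [EuclideanSpace.inner_single_right, PiLp.sub_apply, real_inner_smul_left]
      ring
    have hsum : vdiv (fun y => ‖gradient (fun y => Cc ^ m * (μ ^ q + ((‖y - x₀‖ ^ 2 : ℝ)) ^ (q / 2)) ^ (-m)) y‖ ^ (p - 2) •
          gradient (fun y => Cc ^ m * (μ ^ q + ((‖y - x₀‖ ^ 2 : ℝ)) ^ (q / 2)) ^ (-m)) y) x
        = (n:ℝ) * ((-K) * (μ ^ q + ((‖x - x₀‖ ^ 2 : ℝ)) ^ (q / 2)) ^ (-al))
          + ((-K) * ((-al) * (μ ^ q + ((‖x - x₀‖ ^ 2 : ℝ)) ^ (q / 2)) ^ (-al - 1) *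
            (q / 2 * ((‖x - x₀‖ ^ 2 : ℝ)) ^ (q / 2 - 1)) * 2)) * (‖x - x₀‖ ^ 2 : ℝ) := by
      simp only [vdiv, h1]
      rw [Finset.sum_add_distrib, Finset.sum_const, ← Finset.mul_sum, Finset.card_univ,
        Fintype.card_fin, hnormsum, nsmul_eq_mul]
    -- final scalar identity
    have hww : ((‖x - x₀‖ ^ 2 : ℝ)) ^ (q / 2 - 1) * (‖x - x₀‖ ^ 2 : ℝ)
        = ((‖x - x₀‖ ^ 2 : ℝ)) ^ (q / 2) := by
      have h := Real.rpow_add hwx (q / 2 - 1) 1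
      rw [Real.rpow_one] at h
      rw [← h]
      congr 1
      ring
    have hDD : (μ ^ q + ((‖x - x₀‖ ^ 2 : ℝ)) ^ (q / 2)) ^ (-al)
        = (μ ^ q + ((‖x - x₀‖ ^ 2 : ℝ)) ^ (q / 2)) ^ (-al - 1) *
          (μ ^ q + ((‖x - x₀‖ ^ 2 : ℝ)) ^ (q / 2)) := by
      rw [← Real.rpow_add_one hDx.ne' (-al - 1)]
      congr 1
      ring
    have haq : al * q = (n:ℝ) := by
      rw [hal, hm, hq]
      field_simp
      ring
    have hmid : -((n:ℝ) * ((-K) * (μ ^ q + ((‖x - x₀‖ ^ 2 : ℝ)) ^ (q / 2)) ^ (-al))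
          + ((-K) * ((-al) * (μ ^ q + ((‖x - x₀‖ ^ 2 : ℝ)) ^ (q / 2)) ^ (-al - 1) *
            (q / 2 * ((‖x - x₀‖ ^ 2 : ℝ)) ^ (q / 2 - 1)) * 2)) * (‖x - x₀‖ ^ 2 : ℝ))
        = K * ((n:ℝ) * μ ^ q) * (μ ^ q + ((‖x - x₀‖ ^ 2 : ℝ)) ^ (q / 2)) ^ (-al - 1) := by
      rw [hDD]
      linear_combination (-(K * al * q * (μ ^ q + ((‖x - x₀‖ ^ 2 : ℝ)) ^ (q / 2)) ^ (-al - 1))) * hww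
        - K * (μ ^ q + ((‖x - x₀‖ ^ 2 : ℝ)) ^ (q / 2)) ^ (-al - 1) *
          ((‖x - x₀‖ ^ 2 : ℝ)) ^ (q / 2) * haq
    have hmqa : m * q = a := by
      rw [hm, hq, ha]
      field_simp
    have hfinal : K * ((n:ℝ) * μ ^ q) * (μ ^ q + ((‖x - x₀‖ ^ 2 : ℝ)) ^ (q / 2)) ^ (-al - 1)
        = (Cc ^ m * (μ ^ q + ((‖x - x₀‖ ^ 2 : ℝ)) ^ (q / 2)) ^ (-m)) ^ ((n:ℝ) * p / ((n:ℝ) - p) - 1) := by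
      have hRpos : (0:ℝ) < Cc ^ m * (μ ^ q + ((‖x - x₀‖ ^ 2 : ℝ)) ^ (q / 2)) ^ (-m) :=
        mul_pos (rpow_pos_of_pos hC0 m) (rpow_pos_of_pos hDx (-m))
      apply pos_eq_of_log
        (by positivity) (rpow_pos_of_pos hRpos _)
      rw [Real.log_mul (mul_pos hK0 (mul_pos hn0 hμq)).ne' (rpow_pos_of_pos hDx _).ne',
        Real.log_mul hK0.ne' (mul_pos hn0 hμq).ne',
        Real.log_mul hn0.ne' hμq.ne', Real.log_rpow hμ, Real.log_rpow hDx,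
        hK, hmqa,
        Real.log_rpow (mul_pos ha0 (rpow_pos_of_pos hC0 m)),
        Real.log_mul ha0.ne' (rpow_pos_of_pos hC0 m).ne', Real.log_rpow hC0,
        Real.log_rpow hRpos,
        Real.log_mul (rpow_pos_of_pos hC0 m).ne' (rpow_pos_of_pos hDx (-m)).ne',
        Real.log_rpow hC0, Real.log_rpow hDx,
        hCc, Real.log_mul (mul_pos (rpow_pos_of_pos hn0 _) (rpow_pos_of_pos ha0 _)).ne'
          (rpow_pos_of_pos hμ _).ne',
        Real.log_mul (rpow_pos_of_pos hn0 _).ne' (rpow_pos_of_pos ha0 _).ne',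
        Real.log_rpow hn0, Real.log_rpow ha0, Real.log_rpow hμ]
      have hem : ((n:ℝ) * p / ((n:ℝ) - p) - 1) * m = al + 1 := by
        rw [hal, hm]; field_simp; ring
      have hpq : (p - 1) * q = p := by
        rw [hq]; field_simp
      have hip : p * p⁻¹ = 1 := mul_inv_cancel₀ hp0.ne'
      have hip1 : (p - 1) * (p - 1)⁻¹ = 1 := mul_inv_cancel₀ hp1.ne'
      linear_combination (Real.log (μ ^ q + ((‖x - x₀‖ ^ 2 : ℝ)) ^ (q / 2)) -
          (Real.log (n:ℝ) / p + (p - 1) / p * Real.log a + Real.log μ / (p - 1))) * hem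
        + (Real.log μ / (p - 1)) * hpq
        + ((1 - p) * Real.log a - Real.log (n:ℝ)) * hip
        - p * (p - 1)⁻¹ * Real.log μ * hip1
    rw [hsum, hmid]
    exact hfinal
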